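/- arXiv:2602.10793 — 3 statements merged into one kernel-verified Lean document; each statement's English description precedes it below -/
import Mathlib

section
/- The DemoDICE loss L is L_f-smooth with L_f = (1+γ)²/(1+α); that is, its gradient is Lipschitz continuous with constant L_f: for all ν, ν' : S → ℝ, ‖∇L(ν) − ∇L(ν')‖₂ ≤ ((1+γ)²/(1+α)) ‖ν − ν'‖₂. -/
/-!
With `β = 1 + α`, the loss is a linear functional plus `β · logSumExp (Φ ν + b)`, where
`b = r / β + log d^U` and `Φ ν = (γ Pν − ν(s)) / β` has norm at most `(1 + γ) / β` as a map
from `ℓ²(S)` to `ℓ^∞(S × A)`. The Hessian of `logSumExp` at `y` is the covariance form of the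
softmax distribution of `y`, and `|Cov(u, v)| ≤ E|u − E u| · ‖v‖∞ ≤ ‖u‖∞ ‖v‖∞` (the mean
absolute deviation is at most the standard deviation), so the derivative of `logSumExp` is
`1`-Lipschitz for the sup norm. The chain rule then gives the constant
`β · ((1 + γ) / β)² = (1 + γ)² / β`.
-/

open Real Finset

noncomputable section

section LogSumExp

variable {ι : Type*} [Fintype ι]

def logSumExp (y : ι → ℝ) : ℝ := log (∑ i, exp (y i))

def softmax (y : ι → ℝ) (i : ι) : ℝ := exp (y i) / ∑ j, exp (y j)

def softmaxMean (y : ι → ℝ) : (ι → ℝ) →L[ℝ] ℝ :=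
  ∑ i, softmax y i • ContinuousLinearMap.proj i

def softmaxCov (y : ι → ℝ) : (ι → ℝ) →L[ℝ] (ι → ℝ) →L[ℝ] ℝ :=
  ∑ i, (softmax y i • (ContinuousLinearMap.proj i - softmaxMean y)).smulRight
    (ContinuousLinearMap.proj i)

lemma softmaxMean_apply (y u : ι → ℝ) : softmaxMean y u = ∑ i, softmax y i * u i := by
  simp [softmaxMean]

lemma softmaxCov_apply (y u v : ι → ℝ) :
    softmaxCov y u v = ∑ i, softmax y i * (u i - softmaxMean y u) * v i := by
  simp [softmaxCov, mul_assoc]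

lemma sum_exp_pos [Nonempty ι] (y : ι → ℝ) : 0 < ∑ i, exp (y i) :=
  sum_pos (fun i _ ↦ exp_pos (y i)) univ_nonempty

lemma softmax_nonneg (y : ι → ℝ) (i : ι) : 0 ≤ softmax y i := by
  unfold softmax; positivity

lemma sum_softmax [Nonempty ι] (y : ι → ℝ) : ∑ i, softmax y i = 1 := by
  simp only [softmax, ← sum_div, div_self (sum_exp_pos y).ne']

lemma softmax_eq_exp_sub_logSumExp [Nonempty ι] (y : ι → ℝ) (i : ι) :
    softmax y i = exp (y i - logSumExp y) := by
  rw [exp_sub, logSumExp, exp_log (sum_exp_pos y), softmax]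

lemma hasFDerivAt_logSumExp [Nonempty ι] (y : ι → ℝ) :
    HasFDerivAt logSumExp (softmaxMean y) y := by
  have hsum : HasFDerivAt (fun y : ι → ℝ ↦ ∑ i, exp (y i))
      (∑ i, exp (y i) • ContinuousLinearMap.proj i) y :=
    HasFDerivAt.fun_sum fun i _ ↦ (hasFDerivAt_apply i y).exp
  refine (hsum.log (sum_exp_pos y).ne').congr_fderiv ?_
  simp only [softmaxMean, softmax, smul_sum, smul_smul, div_eq_inv_mul]

lemma hasFDerivAt_softmax [Nonempty ι] (y : ι → ℝ) (i : ι) :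
    HasFDerivAt (softmax · i)
      (softmax y i • (ContinuousLinearMap.proj i - softmaxMean y)) y := by
  simp only [softmax_eq_exp_sub_logSumExp]
  exact ((hasFDerivAt_apply i y).sub (hasFDerivAt_logSumExp y)).exp

lemma hasFDerivAt_softmaxMean [Nonempty ι] (y : ι → ℝ) :
    HasFDerivAt softmaxMean (softmaxCov y) y := by
  unfold softmaxMean softmaxCov
  exact HasFDerivAt.fun_sum fun i _ ↦ (hasFDerivAt_softmax y i).smul_const
    (ContinuousLinearMap.proj (R := ℝ) (φ := fun _ : ι ↦ ℝ) i)

lemma sum_mul_abs_sub_sum_mul_le_norm {w : ι → ℝ} (hw0 : ∀ i, 0 ≤ w i) (hw1 : ∑ i, w i = 1)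
    (u : ι → ℝ) : ∑ i, w i * |u i - ∑ j, w j * u j| ≤ ‖u‖ := by
  set m := ∑ j, w j * u j
  have jensen : (∑ i, w i * |u i - m|) ^ 2 ≤ ∑ i, w i * |u i - m| ^ 2 :=
    (convexOn_pow 2).map_sum_le (fun i _ ↦ hw0 i) hw1 fun i _ ↦ abs_nonneg (u i - m)
  have variance : ∑ i, w i * |u i - m| ^ 2 = ∑ i, w i * u i ^ 2 - m ^ 2 := by
    have cross : ∑ i, w i * (2 * u i * m) = 2 * m * m := by
      rw [mul_sum]; exact sum_congr rfl fun i _ ↦ by ring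
    simp only [sq_abs, sub_sq, mul_add, mul_sub, sum_add_distrib, sum_sub_distrib, ← sum_mul, hw1,
      cross]
    ring
  have second_moment : ∑ i, w i * u i ^ 2 ≤ ‖u‖ ^ 2 := calc
    ∑ i, w i * u i ^ 2 ≤ ∑ i, w i * ‖u‖ ^ 2 := by
      refine sum_le_sum fun i _ ↦ mul_le_mul_of_nonneg_left ?_ (hw0 i)
      rw [← sq_abs]
      exact pow_le_pow_left₀ (abs_nonneg _) (norm_le_pi_norm u i) 2
    _ = ‖u‖ ^ 2 := by rw [← sum_mul, hw1, one_mul]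
  exact le_of_sq_le_sq (by nlinarith [sq_nonneg m]) (norm_nonneg u)

lemma norm_softmaxCov_le [Nonempty ι] (y : ι → ℝ) : ‖softmaxCov y‖ ≤ 1 := by
  refine ContinuousLinearMap.opNorm_le_bound _ zero_le_one fun u ↦
    ContinuousLinearMap.opNorm_le_bound _ (by positivity) fun v ↦ ?_
  have hmad : ∑ i, softmax y i * |u i - softmaxMean y u| ≤ ‖u‖ := by
    simpa only [softmaxMean_apply] using
      sum_mul_abs_sub_sum_mul_le_norm (softmax_nonneg y) (sum_softmax y) u
  rw [softmaxCov_apply, Real.norm_eq_abs]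
  calc |∑ i, softmax y i * (u i - softmaxMean y u) * v i|
      ≤ ∑ i, softmax y i * |u i - softmaxMean y u| * ‖v‖ := by
        refine (abs_sum_le_sum_abs _ _).trans (sum_le_sum fun i _ ↦ ?_)
        rw [abs_mul, abs_mul, abs_of_nonneg (softmax_nonneg y i)]
        exact mul_le_mul_of_nonneg_left (norm_le_pi_norm v i)
          (mul_nonneg (softmax_nonneg y i) (abs_nonneg _))
    _ ≤ 1 * ‖u‖ * ‖v‖ := by
        rw [← sum_mul, one_mul]
        exact mul_le_mul_of_nonneg_right hmad (norm_nonneg v)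

lemma differentiable_logSumExp [Nonempty ι] : Differentiable ℝ (logSumExp (ι := ι)) :=
  fun y ↦ (hasFDerivAt_logSumExp y).differentiableAt

lemma lipschitzWith_fderiv_logSumExp [Nonempty ι] :
    LipschitzWith 1 (fderiv ℝ (logSumExp (ι := ι))) := by
  have hfderiv : fderiv ℝ (logSumExp (ι := ι)) = softmaxMean :=
    funext fun y ↦ (hasFDerivAt_logSumExp y).fderiv
  rw [hfderiv]
  refine lipschitzWith_of_nnnorm_fderiv_le
    (fun y ↦ (hasFDerivAt_softmaxMean y).differentiableAt) fun y ↦ ?_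
  rw [(hasFDerivAt_softmaxMean y).fderiv, ← NNReal.coe_le_coe, coe_nnnorm]
  exact norm_softmaxCov_le y

end LogSumExp

section

variable {E F G : Type*} [NormedAddCommGroup E] [NormedSpace ℝ E] [NormedAddCommGroup F]
  [NormedSpace ℝ F] [NormedAddCommGroup G] [NormedSpace ℝ G]

lemma lipschitzWith_fderiv_comp_add_const {f : F → G} (hf : Differentiable ℝ f) {K : NNReal}
    (hK : LipschitzWith K (fderiv ℝ f)) (A : E →L[ℝ] F) (b : F) :
    LipschitzWith (K * ‖A‖₊ ^ 2) (fderiv ℝ fun x ↦ f (A x + b)) := by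
  have hfderiv (x : E) : fderiv ℝ (fun x ↦ f (A x + b)) x = (fderiv ℝ f (A x + b)).comp A :=
    ((hf _).hasFDerivAt.comp x (A.hasFDerivAt.add_const b)).fderiv
  refine LipschitzWith.of_dist_le_mul fun x y ↦ ?_
  simp only [hfderiv, dist_eq_norm, ← ContinuousLinearMap.sub_comp]
  calc ‖(fderiv ℝ f (A x + b) - fderiv ℝ f (A y + b)).comp A‖
      ≤ ‖fderiv ℝ f (A x + b) - fderiv ℝ f (A y + b)‖ * ‖A‖ :=
        ContinuousLinearMap.opNorm_comp_le _ _
    _ ≤ K * ‖A (x - y)‖ * ‖A‖ := by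
        gcongr
        simpa [dist_eq_norm] using hK.dist_le_mul (A x + b) (A y + b)
    _ ≤ K * (‖A‖ * ‖x - y‖) * ‖A‖ := by gcongr; exact A.le_opNorm _
    _ = ↑(K * ‖A‖₊ ^ 2) * ‖x - y‖ := by push_cast; ring

lemma lipschitzWith_fderiv_clm_add_const_mul {g : E → ℝ} (hg : Differentiable ℝ g) {K : NNReal}
    (hK : LipschitzWith K (fderiv ℝ g)) (T : E →L[ℝ] ℝ) (c : ℝ) :
    LipschitzWith (‖c‖₊ * K) (fderiv ℝ fun x ↦ T x + c * g x) := by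
  have hfderiv (x : E) : fderiv ℝ (fun x ↦ T x + c * g x) x = T + c • fderiv ℝ g x :=
    (T.hasFDerivAt.add ((hg x).hasFDerivAt.const_mul c)).fderiv
  refine LipschitzWith.of_dist_le_mul fun x y ↦ ?_
  rw [hfderiv, hfderiv, dist_eq_norm, add_sub_add_left_eq_sub, ← smul_sub, norm_smul,
    ← dist_eq_norm, NNReal.coe_mul, coe_nnnorm, mul_assoc]
  exact mul_le_mul_of_nonneg_left (hK.dist_le_mul x y) (norm_nonneg c)

end

lemma lipschitzWith_gradient_iff {E : Type*} [NormedAddCommGroup E] [InnerProductSpace ℝ E]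
    [CompleteSpace E] (f : E → ℝ) (K : NNReal) :
    LipschitzWith K (gradient f) ↔ LipschitzWith K (fderiv ℝ f) :=
  (InnerProductSpace.toDual ℝ E).symm.isometry.lipschitzWith_iff K

section

variable {S A : Type*} [Fintype S]

def advantageCLM (γ : ℝ) (P : S × A → S → ℝ) : EuclideanSpace ℝ S →L[ℝ] (S × A → ℝ) :=
  ContinuousLinearMap.pi fun p ↦
    γ • ∑ s', P p s' • EuclideanSpace.proj s' - EuclideanSpace.proj p.1

lemma advantageCLM_apply (γ : ℝ) (P : S × A → S → ℝ) (ν : EuclideanSpace ℝ S) (p : S × A) :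
    advantageCLM γ P ν p = γ * ∑ s', P p s' * ν s' - ν p.1 := by
  simp [advantageCLM]

lemma norm_euclideanSpace_proj_le (s : S) : ‖(EuclideanSpace.proj s : StrongDual ℝ _)‖ ≤ 1 :=
  ContinuousLinearMap.opNorm_le_bound _ zero_le_one fun ν ↦ by
    simpa using PiLp.norm_apply_le ν s

lemma norm_advantageCLM_le [Fintype A] {γ : ℝ} (hγ : 0 ≤ γ) {P : S × A → S → ℝ}
    (hP0 : ∀ p s', 0 ≤ P p s') (hP1 : ∀ p, ∑ s', P p s' = 1) : ‖advantageCLM γ P‖ ≤ 1 + γ := by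
  refine ContinuousLinearMap.norm_pi_le_of_le (fun p ↦ ?_) (by positivity)
  calc ‖γ • ∑ s', P p s' • EuclideanSpace.proj s' - EuclideanSpace.proj p.1‖
      ≤ γ * ∑ s', P p s' * 1 + 1 := by
        refine (norm_sub_le _ _).trans (add_le_add ?_ (norm_euclideanSpace_proj_le p.1))
        rw [norm_smul, Real.norm_of_nonneg hγ]
        refine mul_le_mul_of_nonneg_left ((norm_sum_le _ _).trans (sum_le_sum fun s' _ ↦ ?_)) hγ
        rw [norm_smul, Real.norm_of_nonneg (hP0 p s')]
        exact mul_le_mul_of_nonneg_left (norm_euclideanSpace_proj_le s') (hP0 p s')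
    _ = 1 + γ := by rw [← sum_mul, hP1]; ring

end

end

theorem demoDICE_loss_smooth_general
    {S A : Type*} [Fintype S] [Fintype A] [Nonempty S] [Nonempty A]
    (γ α : ℝ) (hγ0 : 0 ≤ γ) (hα : 0 ≤ α)
    (μ : S → ℝ)
    (dU : S × A → ℝ) (hdU0 : ∀ p, 0 < dU p)
    (P : S × A → S → ℝ) (hP0 : ∀ p s', 0 ≤ P p s') (hP1 : ∀ p, ∑ s', P p s' = 1)
    (r : S × A → ℝ)
    (Adv : EuclideanSpace ℝ S → S × A → ℝ)
    (hAdv : ∀ ν p, Adv ν p = r p + γ * ∑ s', P p s' * ν s' - ν p.1)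
    (L : EuclideanSpace ℝ S → ℝ)
    (hL : ∀ ν, L ν = (1 - γ) * ∑ s, μ s * ν s
        + (1 + α) * Real.log (∑ p, dU p * Real.exp (Adv ν p / (1 + α)))) :
    ∀ ν ν' : EuclideanSpace ℝ S,
      ‖gradient L ν - gradient L ν'‖ ≤ ((1 + γ) ^ 2 / (1 + α)) * ‖ν - ν'‖ := by
  have hβ : 0 < 1 + α := by linarith
  set T : EuclideanSpace ℝ S →L[ℝ] ℝ := (1 - γ) • ∑ s, μ s • EuclideanSpace.proj s
  set Φ := (1 + α)⁻¹ • advantageCLM γ P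
  set b : S × A → ℝ := fun p ↦ r p / (1 + α) + log (dU p)
  have harg (ν p) : (Φ ν + b) p = Adv ν p / (1 + α) + log (dU p) := by
    simp only [Φ, b, Pi.add_apply, FunLike.coe_smul, Pi.smul_apply, advantageCLM_apply,
      smul_eq_mul, hAdv]
    ring
  have hLeq : L = fun ν ↦ T ν + (1 + α) * logSumExp (Φ ν + b) := by
    funext ν
    simp [hL, logSumExp, harg, exp_add, exp_log (hdU0 _), T, mul_comm, mul_sum]
  have hΦ : ‖Φ‖ ≤ (1 + γ) / (1 + α) := by
    rw [norm_smul, norm_inv, Real.norm_of_nonneg hβ.le, inv_mul_eq_div]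
    exact div_le_div_of_nonneg_right (norm_advantageCLM_le hγ0 hP0 hP1) hβ.le
  have hlip := lipschitzWith_fderiv_clm_add_const_mul (g := fun ν ↦ logSumExp (Φ ν + b))
    (differentiable_logSumExp.comp (g := logSumExp) (Φ.differentiable.add_const b))
    (lipschitzWith_fderiv_comp_add_const differentiable_logSumExp lipschitzWith_fderiv_logSumExp
      Φ b) T (1 + α)
  rw [← lipschitzWith_gradient_iff, ← hLeq] at hlip
  intro ν ν'
  calc ‖gradient L ν - gradient L ν'‖ ≤ (1 + α) * ‖Φ‖ ^ 2 * ‖ν - ν'‖ := by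
        simpa [← dist_eq_norm, abs_of_pos hβ] using hlip.dist_le_mul ν ν'
    _ ≤ (1 + α) * ((1 + γ) / (1 + α)) ^ 2 * ‖ν - ν'‖ := by gcongr
    _ = (1 + γ) ^ 2 / (1 + α) * ‖ν - ν'‖ := by field_simp

/-- The DemoDICE loss `L` is `L_f`-smooth with `L_f = (1+γ)²/(1+α)`:
its gradient is Lipschitz continuous with constant `(1+γ)²/(1+α)`. -/
theorem demoDICE_loss_smooth
    {S A : Type*} [Fintype S] [Fintype A] [Nonempty S] [Nonempty A]
    (γ α : ℝ) (hγ0 : 0 ≤ γ) (hγ1 : γ < 1) (hα : 0 ≤ α)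
    (μ : S → ℝ) (hμ0 : ∀ s, 0 ≤ μ s) (hμ1 : ∑ s, μ s = 1)
    (dU : S × A → ℝ) (hdU0 : ∀ p, 0 < dU p) (hdU1 : ∑ p, dU p = 1)
    (P : S × A → S → ℝ) (hP0 : ∀ p s', 0 ≤ P p s') (hP1 : ∀ p, ∑ s', P p s' = 1)
    (r : S × A → ℝ)
    (Adv : EuclideanSpace ℝ S → S × A → ℝ)
    (hAdv : ∀ ν p, Adv ν p = r p + γ * ∑ s', P p s' * ν s' - ν p.1)
    (L : EuclideanSpace ℝ S → ℝ)
    (hL : ∀ ν, L ν = (1 - γ) * ∑ s, μ s * ν s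
        + (1 + α) * Real.log (∑ p, dU p * Real.exp (Adv ν p / (1 + α)))) :
    ∀ ν ν' : EuclideanSpace ℝ S,
      ‖gradient L ν - gradient L ν'‖ ≤ ((1 + γ) ^ 2 / (1 + α)) * ‖ν - ν'‖ :=
  demoDICE_loss_smooth_general γ α hγ0 hα μ dU hdU0 P hP0 hP1 r Adv hAdv L hL
end

section
/- For every ν : S → ℝ, the gradient of the DemoDICE loss is orthogonal to the all-ones vector: ⟨∇L(ν), 𝟙_S⟩ = ∑_{s∈S} (∂L/∂ν(s))(ν) = 0, where 𝟙_S is the all-ones vector on S. Equivalently, the directional derivative of L at ν in the direction 𝟙_S is zero. -/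
/-!
Adding `t` to every coordinate of `ν` lowers each advantage by `(1 - γ) t`, since every row of `P`
sums to one. The log-sum-exp term therefore drops by exactly `(1 - γ) t`, which the linear term
`(1 - γ) ∑ μ ν` regains because `μ` sums to one. So `L` is constant along `𝟙`, and its gradient is
orthogonal to `𝟙`.
-/

open RealInnerProductSpace

theorem inner_gradient_eq_zero_of_forall_add_smul_eq {F : Type*} [NormedAddCommGroup F]
    [InnerProductSpace ℝ F] [CompleteSpace F] {f : F → ℝ} {x v : F}
    (h : ∀ t : ℝ, f (x + t • v) = f x) : ⟪gradient f x, v⟫ = 0 := by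
  by_cases hf : DifferentiableAt ℝ f x
  · have hline : (fun t : ℝ => f (x + t • v)) = fun _ => f x := funext h
    rw [gradient, InnerProductSpace.toDual_symm_apply, ← hf.lineDeriv_eq_fderiv, lineDeriv,
      hline, deriv_const]
  · simp [gradient_eq_zero_of_not_differentiableAt hf]

theorem Finset.sum_mul_add_const_of_sum_eq_one {ι : Type*} [Fintype ι] {w : ι → ℝ}
    (hw : ∑ i, w i = 1) (a : ι → ℝ) (t : ℝ) :
    ∑ i, w i * (a i + t) = ∑ i, w i * a i + t := by
  simp only [mul_add, Finset.sum_add_distrib, ← Finset.sum_mul, hw, one_mul]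

theorem Real.log_sum_mul_exp_sub {ι : Type*} [Fintype ι] (w a : ι → ℝ)
    (hne : ∑ i, w i * Real.exp (a i) ≠ 0) (c : ℝ) :
    Real.log (∑ i, w i * Real.exp (a i - c)) = Real.log (∑ i, w i * Real.exp (a i)) - c := by
  have hfactor : ∑ i, w i * Real.exp (a i - c) = Real.exp (-c) * ∑ i, w i * Real.exp (a i) := by
    rw [Finset.mul_sum]
    refine Finset.sum_congr rfl fun i _ => ?_
    rw [sub_eq_add_neg, Real.exp_add]
    ring
  rw [hfactor, Real.log_mul (Real.exp_pos _).ne' hne, Real.log_exp]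
  ring

theorem demoDICE_gradient_orthogonal_ones_general
    {S A : Type*} [Fintype S] [Fintype A] [Nonempty S] [Nonempty A]
    (γ α : ℝ) (hα : 0 ≤ α)
    (μ : S → ℝ) (hμ1 : ∑ s, μ s = 1)
    (dU : S × A → ℝ) (hdU0 : ∀ p, 0 < dU p)
    (P : S × A → S → ℝ) (hP1 : ∀ p, ∑ s', P p s' = 1)
    (r : S × A → ℝ)
    (Adv : EuclideanSpace ℝ S → S × A → ℝ)
    (hAdv : ∀ ν p, Adv ν p = r p + γ * ∑ s', P p s' * ν s' - ν p.1)
    (L : EuclideanSpace ℝ S → ℝ)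
    (hL : ∀ ν, L ν = (1 - γ) * ∑ s, μ s * ν s
        + (1 + α) * Real.log (∑ p, dU p * Real.exp (Adv ν p / (1 + α))))
    (ones : EuclideanSpace ℝ S) (hones : ∀ s, ones s = 1) :
    ∀ ν : EuclideanSpace ℝ S, ⟪gradient L ν, ones⟫ = 0 := by
  intro ν
  refine inner_gradient_eq_zero_of_forall_add_smul_eq fun t => ?_
  have hα1 : 1 + α ≠ 0 := by linarith
  have hshift : ∀ s, (ν + t • ones) s = ν s + t := fun s => by simp [hones s]
  have hAdv_shift : ∀ p, Adv (ν + t • ones) p / (1 + α)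
      = Adv ν p / (1 + α) - (1 - γ) * t / (1 + α) := fun p => by
    rw [hAdv, hAdv]
    simp only [hshift, Finset.sum_mul_add_const_of_sum_eq_one (hP1 p)]
    ring
  have hpos : 0 < ∑ p, dU p * Real.exp (Adv ν p / (1 + α)) :=
    Finset.sum_pos (fun p _ => mul_pos (hdU0 p) (Real.exp_pos _)) Finset.univ_nonempty
  rw [hL, hL]
  simp only [hshift, hAdv_shift, Finset.sum_mul_add_const_of_sum_eq_one hμ1,
    Real.log_sum_mul_exp_sub _ _ hpos.ne']
  field_simp
  ring

/-- For every `ν`, the gradient of the DemoDICE loss is orthogonal to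
the all-ones vector: `⟨∇L(ν), 𝟙_S⟩ = 0`. -/
theorem demoDICE_gradient_orthogonal_ones
    {S A : Type*} [Fintype S] [Fintype A] [Nonempty S] [Nonempty A]
    (γ α : ℝ) (hγ0 : 0 ≤ γ) (hγ1 : γ < 1) (hα : 0 ≤ α)
    (μ : S → ℝ) (hμ0 : ∀ s, 0 ≤ μ s) (hμ1 : ∑ s, μ s = 1)
    (dU : S × A → ℝ) (hdU0 : ∀ p, 0 < dU p) (hdU1 : ∑ p, dU p = 1)
    (P : S × A → S → ℝ) (hP0 : ∀ p s', 0 ≤ P p s') (hP1 : ∀ p, ∑ s', P p s' = 1)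
    (r : S × A → ℝ)
    (Adv : EuclideanSpace ℝ S → S × A → ℝ)
    (hAdv : ∀ ν p, Adv ν p = r p + γ * ∑ s', P p s' * ν s' - ν p.1)
    (L : EuclideanSpace ℝ S → ℝ)
    (hL : ∀ ν, L ν = (1 - γ) * ∑ s, μ s * ν s
        + (1 + α) * Real.log (∑ p, dU p * Real.exp (Adv ν p / (1 + α))))
    (ones : EuclideanSpace ℝ S) (hones : ∀ s, ones s = 1) :
    ∀ ν : EuclideanSpace ℝ S, ⟪gradient L ν, ones⟫ = 0 :=
  demoDICE_gradient_orthogonal_ones_general γ α hα μ hμ1 dU hdU0 P hP1 r Adv hAdv L hL ones hones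
end

section
/- Let f : ℝ^S → ℝ (S a finite nonempty set) be convex and differentiable with L_f-Lipschitz gradient (L_f > 0), and suppose ⟨∇f(ν), 𝟙_S⟩ = 0 for all ν. Let ν* be a minimizer of f, let S* := {ν* + C·𝟙_S : C ∈ ℝ}, and suppose f satisfies quadratic growth with constant c > 0: f(ν) − f(ν*) ≥ (c/2)‖ν − Π_{S*}(ν)‖₂² for all ν ∉ S*, where Π_{S*} is the orthogonal projection onto S*. Let ν^{(t+1)} := ν^{(t)} − (1/L_f)∇f(ν^{(t)}) be gradient descent iterates from ν^{(0)}, and set ν̂* := Π_{S*}(ν^{(0)}). Then for all t ≥ 1, ‖ν^{(t)} − ν̂*‖₂² ≤ (4 L_f / c) · ‖ν^{(0)} − ν̂*‖₂² / t. -/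
open RealInnerProductSpace Set AffineMap

/-!
Because `∇f ⟂ 𝟙`, the residual `ν^{(t)} - ν̂*` stays orthogonal to `𝟙`, so every iterate has
the same projection `ν̂*` onto `S*`; convexity along `𝟙` makes `ν̂*` a minimizer as well.
For convex `f` with `L`-Lipschitz gradient a step of length `1/L` lowers `f` by at least
`‖∇f‖² / 2L` and does not move the iterate away from any minimizer, so the gap
`a_t = f(ν^{(t)}) - f(ν̂*) ≤ ⟪∇f(ν^{(t)}), ν^{(t)} - ν̂*⟫` obeys
`a_t² ≤ 2L ‖ν^{(0)} - ν̂*‖² (a_t - a_{t+1})`, which forces `t a_t ≤ 2L ‖ν^{(0)} - ν̂*‖²`.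
Quadratic growth converts this bound on `a_t` into the bound on `‖ν^{(t)} - ν̂*‖²`.
-/

theorem mul_natCast_le_of_sq_le_mul_sub {a : ℕ → ℝ} {B : ℝ} (hB : 0 ≤ B)
    (hstep : ∀ n, a n ^ 2 ≤ B * (a n - a (n + 1))) (n : ℕ) : a n * n ≤ B := by
  rcases hB.eq_or_lt with rfl | hB
  · have : a n = 0 := by simpa using hstep n
    simp [this]
  induction n with
  | zero => simpa using hB.le
  | succ n ih =>
    have hn : (0 : ℝ) ≤ n := n.cast_nonneg
    have hquad : ((n : ℝ) + 1) * (B * a n - a n ^ 2) ≤ B ^ 2 := by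
      rcases le_or_gt (a n) B with hx | hx
      · nlinarith [mul_nonneg (sub_nonneg.2 ih) (sub_nonneg.2 hx), sq_nonneg (a n)]
      · nlinarith [sq_nonneg (a n - B / 2), mul_nonneg hn (sub_nonneg.2 ih)]
    have : B * (a (n + 1) * (n + 1)) ≤ B * B := by nlinarith [hstep n]
    exact_mod_cast le_of_mul_le_mul_left this hB

section Line

variable {E : Type*} [NormedAddCommGroup E] [InnerProductSpace ℝ E] {u x y : E}

theorem inner_sub_eq_zero_of_forall_norm_sub_le (h : ∀ D : ℝ, ‖x - y‖ ≤ ‖x - (y + D • u)‖) :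
    ⟪x - y, u⟫ = 0 := by
  have hsq (D : ℝ) : 0 ≤ D ^ 2 * ‖u‖ ^ 2 - 2 * D * ⟪x - y, u⟫ := by
    have := pow_le_pow_left₀ (norm_nonneg _) (h D) 2
    rw [← sub_sub, norm_sub_sq_real (x - y), real_inner_smul_right, norm_smul, mul_pow,
      Real.norm_eq_abs, sq_abs] at this
    linarith
  -- `+ 1` spares a case split on `u = 0`
  have := hsq (⟪x - y, u⟫ / (‖u‖ ^ 2 + 1))
  have hpos : 0 < ‖u‖ ^ 2 + 1 := by positivity
  field_simp at this
  nlinarith [sq_nonneg ⟪x - y, u⟫]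

theorem add_smul_eq_of_norm_sub_le (hxy : ⟪x - y, u⟫ = 0) {D : ℝ}
    (h : ‖x - (y + D • u)‖ ≤ ‖x - y‖) : y + D • u = y := by
  have := pow_le_pow_left₀ (norm_nonneg _) h 2
  rw [← sub_sub, norm_sub_sq_real (x - y), real_inner_smul_right, hxy] at this
  have hDu : ‖D • u‖ = 0 := pow_eq_zero_iff two_ne_zero |>.1 (by nlinarith [sq_nonneg ‖D • u‖])
  rw [norm_eq_zero.1 hDu, add_zero]

variable {proj : E → E} {p : E}

theorem inner_sub_proj_eq_zero (hmem : ∀ x, proj x ∈ {y | ∃ C : ℝ, y = p + C • u})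
    (hmin : ∀ x, ∀ y ∈ {y | ∃ C : ℝ, y = p + C • u}, ‖x - proj x‖ ≤ ‖x - y‖) (x : E) :
    ⟪x - proj x, u⟫ = 0 := by
  obtain ⟨C, hC⟩ := hmem x
  exact inner_sub_eq_zero_of_forall_norm_sub_le fun D ↦
    hmin x _ ⟨C + D, by rw [hC, add_smul, add_assoc]⟩

theorem proj_eq_of_inner_sub_eq_zero (hmem : ∀ x, proj x ∈ {y | ∃ C : ℝ, y = p + C • u})
    (hmin : ∀ x, ∀ y ∈ {y | ∃ C : ℝ, y = p + C • u}, ‖x - proj x‖ ≤ ‖x - y‖)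
    (hy : y ∈ {y | ∃ C : ℝ, y = p + C • u}) (hxy : ⟪x - y, u⟫ = 0) : proj x = y := by
  obtain ⟨C, rfl⟩ := hy
  obtain ⟨D, hD⟩ := hmem x
  have hD' : proj x = p + C • u + (D - C) • u := by rw [hD, sub_smul]; abel
  rw [hD', add_smul_eq_of_norm_sub_le hxy (hD' ▸ hmin x _ ⟨C, rfl⟩)]

end Line

section Smooth

variable {F : Type*} [NormedAddCommGroup F] [InnerProductSpace ℝ F] [CompleteSpace F]
  {f : F → ℝ} {L : ℝ}

theorem HasGradientAt.hasDerivAt_comp_lineMap {g x y : F} {s : ℝ}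
    (hf : HasGradientAt f g (lineMap x y s)) :
    HasDerivAt (f ∘ lineMap x y) ⟪g, y - x⟫ s := by
  simpa using hf.hasFDerivAt.comp_hasDerivAt s hasDerivAt_lineMap

theorem ConvexOn.add_inner_gradient_le {x : F} (hconv : ConvexOn ℝ univ f)
    (hf : DifferentiableAt ℝ f x) (y : F) : f x + ⟪gradient f x, y - x⟫ ≤ f y := by
  have hφ : ConvexOn ℝ univ (f ∘ lineMap x y) := hconv.comp_affineMap (lineMap (k := ℝ) x y)
  have hderiv : HasDerivAt (f ∘ lineMap x y) ⟪gradient f x, y - x⟫ (0 : ℝ) :=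
    HasGradientAt.hasDerivAt_comp_lineMap (s := 0) (by simpa using hf.hasGradientAt)
  have := hφ.le_slope_of_hasDerivAt (mem_univ (0 : ℝ)) (mem_univ 1) one_pos hderiv
  rw [slope_def_field] at this
  simp only [Function.comp_apply, lineMap_apply_zero, lineMap_apply_one, sub_zero, div_one] at this
  linarith

theorem ConvexOn.le_apply_add_smul {x u : F} (hconv : ConvexOn ℝ univ f)
    (hf : DifferentiableAt ℝ f x) (hu : ⟪gradient f x, u⟫ = 0) (C : ℝ) : f x ≤ f (x + C • u) := by
  have := hconv.add_inner_gradient_le hf (x + C • u)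
  rwa [add_sub_cancel_left, real_inner_smul_right, hu, mul_zero, add_zero] at this

theorem le_add_inner_gradient_add_sq (hf : Differentiable ℝ f)
    (hlip : ∀ x y, ‖gradient f x - gradient f y‖ ≤ L * ‖x - y‖) (x y : F) :
    f y ≤ f x + ⟪gradient f x, y - x⟫ + L / 2 * ‖y - x‖ ^ 2 := by
  have hφ (s : ℝ) : HasDerivAt (f ∘ lineMap x y) ⟪gradient f (lineMap x y s), y - x⟫ s :=
    (hf _).hasGradientAt.hasDerivAt_comp_lineMap
  have hparabola (s : ℝ) :
      HasDerivAt (fun s : ℝ ↦ f x + s * ⟪gradient f x, y - x⟫ + L / 2 * s ^ 2 * ‖y - x‖ ^ 2)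
        (⟪gradient f x, y - x⟫ + L * s * ‖y - x‖ ^ 2) s := by
    have := ((hasDerivAt_mul_const ⟪gradient f x, y - x⟫).const_add (f x)).add
      (((hasDerivAt_pow 2 s).const_mul (L / 2)).mul_const (‖y - x‖ ^ 2))
    exact this.congr_deriv (by push_cast; ring)
  have hbound (s : ℝ) (hs : 0 ≤ s) :
      ⟪gradient f (lineMap x y s), y - x⟫ ≤ ⟪gradient f x, y - x⟫ + L * s * ‖y - x‖ ^ 2 := by
    have hdist : ‖lineMap x y s - x‖ = s * ‖y - x‖ := by
      rw [lineMap_apply_module', add_sub_cancel_right, norm_smul, Real.norm_of_nonneg hs]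
    calc ⟪gradient f (lineMap x y s), y - x⟫
        = ⟪gradient f x, y - x⟫ + ⟪gradient f (lineMap x y s) - gradient f x, y - x⟫ := by
          rw [inner_sub_left]; ring
      _ ≤ ⟪gradient f x, y - x⟫ + ‖gradient f (lineMap x y s) - gradient f x‖ * ‖y - x‖ := by
          gcongr; exact real_inner_le_norm _ _
      _ ≤ ⟪gradient f x, y - x⟫ + L * ‖lineMap x y s - x‖ * ‖y - x‖ := by
          gcongr; exact hlip _ _
      _ = ⟪gradient f x, y - x⟫ + L * s * ‖y - x‖ ^ 2 := by rw [hdist]; ring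
  have := image_le_of_deriv_right_le_deriv_boundary (a := 0) (b := 1)
    (fun s _ ↦ (hφ s).continuousAt.continuousWithinAt) (fun s _ ↦ (hφ s).hasDerivWithinAt)
    (by simp) (fun s _ ↦ (hparabola s).continuousAt.continuousWithinAt)
    (fun s _ ↦ (hparabola s).hasDerivWithinAt)
    (fun s hs ↦ hbound s hs.1) (right_mem_Icc.2 zero_le_one)
  simpa using this

theorem sq_norm_gradient_le_two_mul_decrease (hf : Differentiable ℝ f) (hL : 0 < L)
    (hlip : ∀ x y, ‖gradient f x - gradient f y‖ ≤ L * ‖x - y‖) (x : F) :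
    ‖gradient f x‖ ^ 2 ≤ 2 * L * (f x - f (x - (1 / L) • gradient f x)) := by
  have h := le_add_inner_gradient_add_sq hf hlip x (x - (1 / L) • gradient f x)
  rw [sub_sub_cancel_left, inner_neg_right, real_inner_smul_right, real_inner_self_eq_norm_sq,
    norm_neg, norm_smul, Real.norm_of_nonneg (by positivity)] at h
  have hcoeff : L / 2 * (1 / L * ‖gradient f x‖) ^ 2 - 1 / L * ‖gradient f x‖ ^ 2
      = -(‖gradient f x‖ ^ 2 / (2 * L)) := by
    field_simp; ring
  rw [← div_le_iff₀' (by positivity)]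
  linarith

variable {z : F}

theorem norm_gradient_step_sub_le (hconv : ConvexOn ℝ univ f) (hf : Differentiable ℝ f)
    (hL : 0 < L) (hlip : ∀ x y, ‖gradient f x - gradient f y‖ ≤ L * ‖x - y‖)
    (hmin : ∀ y, f z ≤ f y) (x : F) : ‖x - (1 / L) • gradient f x - z‖ ≤ ‖x - z‖ := by
  have hconvx := hconv.add_inner_gradient_le (hf x) z
  have hdecrease := sq_norm_gradient_le_two_mul_decrease hf hL hlip x
  have hgrad : ‖gradient f x‖ ^ 2 ≤ 2 * L * ⟪x - z, gradient f x⟫ := by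
    rw [← neg_sub, inner_neg_right, real_inner_comm] at hconvx
    nlinarith [hmin (x - (1 / L) • gradient f x)]
  rw [← pow_le_pow_iff_left₀ (norm_nonneg _) (norm_nonneg _) two_ne_zero, sub_right_comm,
    norm_sub_sq_real, real_inner_smul_right, norm_smul, Real.norm_of_nonneg (by positivity)]
  have hstep : (1 / L * ‖gradient f x‖) ^ 2 ≤ 2 * (1 / L * ⟪x - z, gradient f x⟫) :=
    calc (1 / L * ‖gradient f x‖) ^ 2 = (1 / L) ^ 2 * ‖gradient f x‖ ^ 2 := mul_pow _ _ _
      _ ≤ (1 / L) ^ 2 * (2 * L * ⟪x - z, gradient f x⟫) := by gcongr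
      _ = 2 * (1 / L * ⟪x - z, gradient f x⟫) := by field_simp
  linarith

theorem gradient_descent_sub_mul_le (hconv : ConvexOn ℝ univ f) (hf : Differentiable ℝ f)
    (hL : 0 < L) (hlip : ∀ x y, ‖gradient f x - gradient f y‖ ≤ L * ‖x - y‖)
    (hmin : ∀ y, f z ≤ f y) {x : ℕ → F} (hx : ∀ t, x (t + 1) = x t - (1 / L) • gradient f (x t))
    (t : ℕ) : (f (x t) - f z) * t ≤ 2 * L * ‖x 0 - z‖ ^ 2 := by
  have hdist (t : ℕ) : ‖x t - z‖ ≤ ‖x 0 - z‖ := by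
    induction t with
    | zero => rfl
    | succ t ih => exact (hx t ▸ norm_gradient_step_sub_le hconv hf hL hlip hmin (x t)).trans ih
  refine mul_natCast_le_of_sq_le_mul_sub (a := fun t ↦ f (x t) - f z) (by positivity)
    (fun t ↦ ?_) t
  have hgap : f (x t) - f z ≤ ‖gradient f (x t)‖ * ‖x 0 - z‖ :=
    calc f (x t) - f z ≤ ⟪gradient f (x t), x t - z⟫ := by
          have := hconv.add_inner_gradient_le (hf (x t)) z
          rw [← neg_sub, inner_neg_right] at this
          linarith
      _ ≤ ‖gradient f (x t)‖ * ‖x t - z‖ := real_inner_le_norm _ _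
      _ ≤ ‖gradient f (x t)‖ * ‖x 0 - z‖ := by gcongr; exact hdist t
  have hdecrease := sq_norm_gradient_le_two_mul_decrease hf hL hlip (x t)
  rw [← hx t] at hdecrease
  calc (f (x t) - f z) ^ 2 ≤ (‖gradient f (x t)‖ * ‖x 0 - z‖) ^ 2 :=
        pow_le_pow_left₀ (sub_nonneg.2 (hmin _)) hgap 2
    _ = ‖gradient f (x t)‖ ^ 2 * ‖x 0 - z‖ ^ 2 := mul_pow _ _ _
    _ ≤ 2 * L * (f (x t) - f (x (t + 1))) * ‖x 0 - z‖ ^ 2 := by gcongr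
    _ = 2 * L * ‖x 0 - z‖ ^ 2 * ((f (x t) - f z) - (f (x (t + 1)) - f z)) := by ring

theorem inner_gradient_descent_sub_eq_zero {x : ℕ → F} {u : F}
    (horth : ∀ y, ⟪gradient f y, u⟫ = 0) (hx : ∀ t, x (t + 1) = x t - (1 / L) • gradient f (x t))
    (h0 : ⟪x 0 - z, u⟫ = 0) (t : ℕ) : ⟪x t - z, u⟫ = 0 := by
  induction t with
  | zero => exact h0
  | succ t ih => rw [hx t, sub_right_comm, inner_sub_left, real_inner_smul_left, horth, ih]; ring

end Smooth

theorem gradient_descent_quadratic_growth_rate_general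
    {S : Type*} [Fintype S]
    (f : EuclideanSpace ℝ S → ℝ)
    (hconv : ConvexOn ℝ Set.univ f)
    (hdiff : Differentiable ℝ f)
    (Lf : ℝ) (hLf : 0 < Lf)
    (hlip : ∀ x y : EuclideanSpace ℝ S,
      ‖gradient f x - gradient f y‖ ≤ Lf * ‖x - y‖)
    (ones : EuclideanSpace ℝ S)
    (horth : ∀ ν, ⟪gradient f ν, ones⟫ = 0)
    (νstar : EuclideanSpace ℝ S) (hmin : ∀ x, f νstar ≤ f x)
    (Sstar : Set (EuclideanSpace ℝ S))
    (hSstar : Sstar = {y | ∃ C : ℝ, y = νstar + C • ones})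
    (proj : EuclideanSpace ℝ S → EuclideanSpace ℝ S)
    (hproj_mem : ∀ x, proj x ∈ Sstar)
    (hproj_min : ∀ x, ∀ y ∈ Sstar, ‖x - proj x‖ ≤ ‖x - y‖)
    (c : ℝ) (hc : 0 < c)
    (hgrowth : ∀ ν, ν ∉ Sstar → (c / 2) * ‖ν - proj ν‖ ^ 2 ≤ f ν - f νstar)
    (ν : ℕ → EuclideanSpace ℝ S)
    (hiter : ∀ t, ν (t + 1) = ν t - (1 / Lf) • gradient f (ν t))
    (νhat : EuclideanSpace ℝ S) (hνhat : νhat = proj (ν 0)) :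
    ∀ t : ℕ, 1 ≤ t →
      ‖ν t - νhat‖ ^ 2 ≤ (4 * Lf / c) * ‖ν 0 - νhat‖ ^ 2 / t := by
  subst hSstar
  have horth_iter : ∀ t, ⟪ν t - νhat, ones⟫ = 0 :=
    inner_gradient_descent_sub_eq_zero horth hiter
      (hνhat ▸ inner_sub_proj_eq_zero hproj_mem hproj_min (ν 0))
  have hproj_iter (t : ℕ) : proj (ν t) = νhat :=
    proj_eq_of_inner_sub_eq_zero hproj_mem hproj_min (hνhat ▸ hproj_mem (ν 0)) (horth_iter t)
  have hhat_min (y : EuclideanSpace ℝ S) : f νhat ≤ f y := by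
    obtain ⟨C, hC⟩ := hνhat ▸ hproj_mem (ν 0)
    have hstar : νstar = νhat + (-C) • ones := by rw [hC, neg_smul, add_neg_cancel_right]
    exact (hstar ▸ hconv.le_apply_add_smul (hdiff νhat) (horth νhat) (-C)).trans (hmin y)
  have hgrowth_iter (t : ℕ) : c / 2 * ‖ν t - νhat‖ ^ 2 ≤ f (ν t) - f νhat := by
    by_cases hmem : ν t ∈ {y | ∃ C : ℝ, y = νstar + C • ones}
    · have hfix : ν t = νhat :=
        sub_eq_zero.1 (by simpa [hproj_iter t] using hproj_min (ν t) (ν t) hmem)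
      simp [hfix]
    · linarith [hproj_iter t ▸ hgrowth (ν t) hmem, hhat_min νstar]
  intro t ht
  have hrate := gradient_descent_sub_mul_le hconv hdiff hLf hlip hhat_min hiter t
  rw [le_div_iff₀ (by exact_mod_cast ht)]
  calc ‖ν t - νhat‖ ^ 2 * t ≤ 2 / c * (f (ν t) - f νhat) * t := by
        gcongr; rw [div_mul_eq_mul_div, le_div_iff₀' hc]; linarith [hgrowth_iter t]
    _ ≤ 2 / c * (2 * Lf * ‖ν 0 - νhat‖ ^ 2) := by rw [mul_assoc]; gcongr
    _ = 4 * Lf / c * ‖ν 0 - νhat‖ ^ 2 := by ring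

/-- For a convex differentiable `f` with `L_f`-Lipschitz gradient whose
gradient is orthogonal to `𝟙_S`, a minimizer `ν*`, and quadratic growth with constant
`c > 0` relative to the optimal line `S* = {ν* + C·𝟙_S}`, gradient descent with step
size `1/L_f` satisfies `‖ν^{(t)} − ν̂*‖₂² ≤ (4 L_f / c) ‖ν^{(0)} − ν̂*‖₂² / t` for all
`t ≥ 1`, where `ν̂* = Π_{S*}(ν^{(0)})`. -/
theorem gradient_descent_quadratic_growth_rate
    {S : Type*} [Fintype S] [Nonempty S]
    (f : EuclideanSpace ℝ S → ℝ)
    (hconv : ConvexOn ℝ Set.univ f)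
    (hdiff : Differentiable ℝ f)
    (Lf : ℝ) (hLf : 0 < Lf)
    (hlip : ∀ x y : EuclideanSpace ℝ S,
      ‖gradient f x - gradient f y‖ ≤ Lf * ‖x - y‖)
    (ones : EuclideanSpace ℝ S) (hones : ∀ s, ones s = 1)
    (horth : ∀ ν, ⟪gradient f ν, ones⟫ = 0)
    (νstar : EuclideanSpace ℝ S) (hmin : ∀ x, f νstar ≤ f x)
    (Sstar : Set (EuclideanSpace ℝ S))
    (hSstar : Sstar = {y | ∃ C : ℝ, y = νstar + C • ones})
    (proj : EuclideanSpace ℝ S → EuclideanSpace ℝ S)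
    (hproj_mem : ∀ x, proj x ∈ Sstar)
    (hproj_min : ∀ x, ∀ y ∈ Sstar, ‖x - proj x‖ ≤ ‖x - y‖)
    (c : ℝ) (hc : 0 < c)
    (hgrowth : ∀ ν, ν ∉ Sstar → (c / 2) * ‖ν - proj ν‖ ^ 2 ≤ f ν - f νstar)
    (ν : ℕ → EuclideanSpace ℝ S)
    (hiter : ∀ t, ν (t + 1) = ν t - (1 / Lf) • gradient f (ν t))
    (νhat : EuclideanSpace ℝ S) (hνhat : νhat = proj (ν 0)) :
    ∀ t : ℕ, 1 ≤ t →
      ‖ν t - νhat‖ ^ 2 ≤ (4 * Lf / c) * ‖ν 0 - νhat‖ ^ 2 / t :=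
  gradient_descent_quadratic_growth_rate_general f hconv hdiff Lf hLf hlip ones horth νstar hmin
    Sstar hSstar proj hproj_mem hproj_min c hc hgrowth ν hiter νhat hνhat
end
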